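/- Assume Milman's reverse Brunn–Minkowski inequality: there is an absolute constant c ≥ 1 such that for any d and convex bodies B₁, B₂ ⊆ ℝ^d there exist γ₁, γ₂ ∈ SL_d(ℝ) with vol(t₁γ₁(B₁) + t₂γ₂(B₂))^{1/d} ≤ c(t₁ vol(B₁)^{1/d} + t₂ vol(B₂)^{1/d}) for all t₁, t₂ > 0. Then for any centrally symmetric convex body C ⊆ ℝ^d there exists an ellipsoid E ⊆ ℝ^d (an image of a Euclidean ball under an invertible linear map) with vol(E) = vol(C), and finite sets Y, Z ⊆ ℤ^d with |Y|, |Z| ≤ (3c)^d, such that C ∩ ℤ^d ⊆ Y + (E ∩ ℤ^d) and E ∩ ℤ^d ⊆ Z + (C ∩ ℤ^d). -/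

import Mathlib

open MeasureTheory
open scoped Pointwise ENNReal

/-!
Apply Milman's inequality to `C` and a Euclidean ball of the same volume; moving the ball by
`γ₁⁻¹ γ₂` gives an ellipsoid `E` with `vol E = vol C` and `vol (C + E/2)`, `vol (E + C/2)` at most
`(3c/2)^d vol C`. Pick a maximal set `Y ⊆ C ∩ ℤ^d` whose pairwise differences avoid `E`.
Since `E` is convex and symmetric, the translates `y + E/2` are disjoint, and they lie in
`C + E/2`; hence `|Y| 2⁻ᵈ vol E ≤ (3c/2)^d vol E`, i.e. `|Y| ≤ (3c)^d`, while maximality says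
exactly that `C ∩ ℤ^d ⊆ Y + (E ∩ ℤ^d)`. The same argument with `C` and `E` swapped gives `Z`.
-/

/-- The integer lattice points in `ℝ^d`. -/
def intLattice (d : ℕ) : Set (EuclideanSpace ℝ (Fin d)) :=
  {x | ∀ i, ∃ n : ℤ, x i = n}

/-- Milman's reverse Brunn–Minkowski inequality with constant `c`. -/
def MilmanRBM (c : ℝ) : Prop :=
  ∀ (d : ℕ), 0 < d → ∀ B₁ B₂ : Set (EuclideanSpace ℝ (Fin d)),
    IsCompact B₁ → Convex ℝ B₁ → (interior B₁).Nonempty →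
    IsCompact B₂ → Convex ℝ B₂ → (interior B₂).Nonempty →
    ∃ γ₁ γ₂ : Matrix.SpecialLinearGroup (Fin d) ℝ,
      ∀ t₁ t₂ : ℝ, 0 < t₁ → 0 < t₂ →
        volume (t₁ • (Matrix.toEuclideanLin (γ₁ : Matrix (Fin d) (Fin d) ℝ) '' B₁) +
            t₂ • (Matrix.toEuclideanLin (γ₂ : Matrix (Fin d) (Fin d) ℝ) '' B₂)) ^
            ((1 : ℝ) / d) ≤
          ENNReal.ofReal c *
            (ENNReal.ofReal t₁ * volume B₁ ^ ((1 : ℝ) / d) +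
             ENNReal.ofReal t₂ * volume B₂ ^ ((1 : ℝ) / d))

open Submodule in
theorem intLattice_eq_span (d : ℕ) :
    intLattice d = span ℤ (Set.range (EuclideanSpace.basisFun (Fin d) ℝ).toBasis) := by
  ext x
  rw [SetLike.mem_coe, Module.Basis.mem_span_iff_repr_mem]
  simp [intLattice, eq_comm]

theorem Set.Finite.exists_separated_cover {G : Type*} [AddGroup G] {F L : Set G} (hF : F.Finite)
    (hL0 : (0 : G) ∈ L) (hLneg : ∀ x ∈ L, -x ∈ L) :
    ∃ Y ⊆ F, Y.Pairwise (fun y y' => y - y' ∉ L) ∧ ∀ x ∈ F, ∃ y ∈ Y, x - y ∈ L := by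
  let S : Set (Set G) := {Y | Y ⊆ F ∧ Y.Pairwise fun y y' => y - y' ∉ L}
  have hS : S.Finite := hF.finite_subsets.subset fun _ hY => hY.1
  obtain ⟨Y, ⟨hYF, hYsep⟩, hYmax⟩ :=
    hS.exists_maximal ⟨∅, Set.empty_subset F, Set.pairwise_empty _⟩
  refine ⟨Y, hYF, hYsep, fun x hx => ?_⟩
  by_cases hxY : x ∈ Y
  · exact ⟨x, hxY, by simpa using hL0⟩
  by_contra! hfar
  have hsep : (insert x Y).Pairwise fun y y' => y - y' ∉ L :=
    hYsep.insert fun y hy _ => ⟨hfar y hy, fun h => hfar y hy (by simpa using hLneg _ h)⟩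
  exact hxY <|
    hYmax ⟨Set.insert_subset hx hYF, hsep⟩ (Set.subset_insert x Y) (Set.mem_insert x Y)

theorem Convex.zero_mem_of_forall_neg_mem {𝕜 E : Type*} [Field 𝕜] [LinearOrder 𝕜]
    [IsStrictOrderedRing 𝕜] [AddCommGroup E] [Module 𝕜 E] {L : Set E} (hL : Convex 𝕜 L)
    (hLneg : ∀ x ∈ L, -x ∈ L) (hne : L.Nonempty) : (0 : E) ∈ L := by
  obtain ⟨x, hx⟩ := hne
  have h2 : (0 : 𝕜) ≤ 2⁻¹ := by positivity
  simpa using hL hx (hLneg x hx) h2 h2 (by norm_num)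

section Packing

variable {E : Type*} [NormedAddCommGroup E] [NormedSpace ℝ E] [MeasurableSpace E] [BorelSpace E]

theorem ncard_mul_measure_half_le (μ : Measure E) [μ.IsAddLeftInvariant] {K L Y : Set E}
    (hY : Y.Finite) (hYK : Y ⊆ K) (hYsep : Y.Pairwise fun y y' => y - y' ∉ L)
    (hLconv : Convex ℝ L) (hLneg : ∀ x ∈ L, -x ∈ L) (hLmeas : MeasurableSet L) :
    Y.ncard * μ ((2 : ℝ)⁻¹ • L) ≤ μ (K + (2 : ℝ)⁻¹ • L) := by
  set H := (2 : ℝ)⁻¹ • L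
  have hdisj : Y.PairwiseDisjoint (· +ᵥ H) := by
    intro y hy y' hy' hne
    refine Set.disjoint_left.2 ?_
    rintro _ ⟨_, ⟨l, hl, rfl⟩, rfl⟩ ⟨_, ⟨l', hl', rfl⟩, h⟩
    refine hYsep hy hy' hne ?_
    have : y - y' = (2 : ℝ)⁻¹ • l' + (2 : ℝ)⁻¹ • -l := by
      simp only [vadd_eq_add] at h
      rw [smul_neg, ← sub_eq_add_neg, sub_eq_sub_iff_add_eq_add, add_comm _ y', h]
    rw [this]
    exact hLconv hl' (hLneg l hl) (by norm_num) (by norm_num) (by norm_num)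
  have hH : MeasurableSet H := hLmeas.const_smul_of_ne_zero (by norm_num)
  calc Y.ncard * μ H = ∑' y : Y, μ ((y : E) +ᵥ H) := by
        simp [measure_vadd, ENNReal.tsum_const, ← hY.cast_ncard_eq]
    _ = μ (⋃ y ∈ Y, y +ᵥ H) :=
      (measure_biUnion hY.countable hdisj fun y _ => hH.const_vadd y).symm
    _ ≤ μ (K + H) :=
      measure_mono (Set.iUnion₂_subset fun y hy => Set.vadd_set_subset_add (hYK hy))

theorem exists_finite_cover_of_inter_finite (μ : Measure E) [μ.IsAddLeftInvariant]
    {Λ : AddSubgroup E} {K L : Set E} (hKΛ : (K ∩ Λ).Finite) (hL0 : (0 : E) ∈ L)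
    (hLneg : ∀ x ∈ L, -x ∈ L) (hLconv : Convex ℝ L) (hLmeas : MeasurableSet L) :
    ∃ Y ⊆ (Λ : Set E), Y.Finite ∧
      Y.ncard * μ ((2 : ℝ)⁻¹ • L) ≤ μ (K + (2 : ℝ)⁻¹ • L) ∧ K ∩ Λ ⊆ Y + (L ∩ Λ) := by
  obtain ⟨Y, hYF, hYsep, hcover⟩ := hKΛ.exists_separated_cover hL0 hLneg
  have hY : Y.Finite := hKΛ.subset hYF
  refine ⟨Y, fun y hy => (hYF hy).2, hY,
    ncard_mul_measure_half_le μ hY (fun y hy => (hYF hy).1) hYsep hLconv hLneg hLmeas,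
    fun x hx => ?_⟩
  obtain ⟨y, hy, hxy⟩ := hcover x hx
  exact ⟨y, hy, x - y, ⟨hxy, Λ.sub_mem hx.2 (hYF hy).2⟩, add_sub_cancel y x⟩

theorem natCast_le_of_mul_measure_half_le [FiniteDimensional ℝ E] (μ : Measure E)
    [μ.IsAddHaarMeasure] {L : Set E} (hL0 : μ L ≠ 0) (hLtop : μ L ≠ ∞) {n : ℕ} {a : ℝ}
    (ha : 0 ≤ a)
    (h : n * μ ((2 : ℝ)⁻¹ • L) ≤ ENNReal.ofReal (a / 2) ^ Module.finrank ℝ E * μ L) :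
    (n : ℝ) ≤ a ^ Module.finrank ℝ E := by
  set d := Module.finrank ℝ E
  rw [Measure.addHaar_smul, abs_of_pos (by norm_num), ← mul_assoc,
    ENNReal.mul_le_mul_iff_left hL0 hLtop, ← ENNReal.ofReal_pow (by positivity),
    ← ENNReal.ofReal_natCast, ← ENNReal.ofReal_mul (by positivity),
    ENNReal.ofReal_le_ofReal_iff (by positivity)] at h
  calc (n : ℝ) = n * 2⁻¹ ^ d * 2 ^ d := by
        rw [mul_assoc, ← mul_pow, inv_mul_cancel₀ two_ne_zero, one_pow, mul_one]
    _ ≤ (a / 2) ^ d * 2 ^ d := by gcongr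
    _ = a ^ d := by rw [← mul_pow, div_mul_cancel₀ a two_ne_zero]

end Packing

theorem exists_intLattice_cover {d : ℕ} {K L : Set (EuclideanSpace ℝ (Fin d))} {a : ℝ}
    (ha : 0 ≤ a) (hK : Bornology.IsBounded K) (hL : IsCompact L) (hLconv : Convex ℝ L)
    (hLneg : ∀ x ∈ L, -x ∈ L) (hL0 : volume L ≠ 0)
    (hvol : volume (K + (2 : ℝ)⁻¹ • L) ≤ ENNReal.ofReal (a / 2) ^ d * volume L) :
    ∃ Y ⊆ intLattice d, Y.Finite ∧ (Y.ncard : ℝ) ≤ a ^ d ∧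
      K ∩ intLattice d ⊆ Y + (L ∩ intLattice d) := by
  let b := (EuclideanSpace.basisFun (Fin d) ℝ).toBasis
  obtain ⟨Y, hYΛ, hYfin, hYvol, hcover⟩ := exists_finite_cover_of_inter_finite volume
    (Λ := (Submodule.span ℤ (Set.range b)).toAddSubgroup) (ZSpan.setFinite_inter b hK)
    (hLconv.zero_mem_of_forall_neg_mem hLneg (nonempty_of_measure_ne_zero hL0)) hLneg hLconv
    hL.measurableSet
  have hfr : Module.finrank ℝ (EuclideanSpace ℝ (Fin d)) = d := finrank_euclideanSpace_fin
  rw [Submodule.coe_toAddSubgroup, ← intLattice_eq_span] at hYΛ hcover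
  refine ⟨Y, hYΛ, hYfin, ?_, hcover⟩
  simpa only [hfr] using natCast_le_of_mul_measure_half_le volume hL0 hL.measure_lt_top.ne ha
    (hYvol.trans (by rwa [hfr]))

theorem exists_pos_measure_closedBall_eq {E : Type*} [NormedAddCommGroup E] [NormedSpace ℝ E]
    [MeasurableSpace E] [BorelSpace E] [FiniteDimensional ℝ E] [Nontrivial E] (μ : Measure E)
    [μ.IsAddHaarMeasure] {V : ℝ≥0∞} (hV0 : V ≠ 0) (hVtop : V ≠ ∞) :
    ∃ R > 0, μ (Metric.closedBall 0 R) = V := by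
  set B := μ (Metric.closedBall (0 : E) 1)
  have hB0 : B ≠ 0 := (Metric.measure_closedBall_pos μ 0 one_pos).ne'
  have hBtop : B ≠ ∞ := measure_closedBall_lt_top.ne
  set d := Module.finrank ℝ E
  have hd : (d : ℝ) ≠ 0 := Nat.cast_ne_zero.2 Module.finrank_pos.ne'
  have hx : 0 < (V / B).toReal :=
    ENNReal.toReal_pos (ENNReal.div_ne_zero.2 ⟨hV0, hBtop⟩) (ENNReal.div_ne_top hVtop hB0)
  refine ⟨(V / B).toReal ^ (d : ℝ)⁻¹, Real.rpow_pos_of_pos hx _, ?_⟩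
  rw [Measure.addHaar_closedBall' μ _ (Real.rpow_pos_of_pos hx _).le, ← Real.rpow_natCast,
    ← Real.rpow_mul hx.le, inv_mul_cancel₀ hd, Real.rpow_one,
    ENNReal.ofReal_toReal (ENNReal.div_ne_top hVtop hB0), ENNReal.div_mul_cancel hB0 hBtop]

theorem ENNReal.le_pow_mul_of_rpow_le {a b V : ℝ≥0∞} {d : ℕ} (hd : d ≠ 0)
    (h : a ^ ((1 : ℝ) / d) ≤ b * V ^ ((1 : ℝ) / d)) : a ≤ b ^ d * V := by
  have hd' : (0 : ℝ) < d := Nat.cast_pos.2 (Nat.pos_of_ne_zero hd)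
  rw [one_div, ENNReal.rpow_inv_le_iff hd', ENNReal.mul_rpow_of_nonneg _ _ hd'.le,
    ← ENNReal.rpow_mul, inv_mul_cancel₀ hd'.ne', ENNReal.rpow_one, ENNReal.rpow_natCast] at h
  exact h

namespace Matrix.SpecialLinearGroup

variable {ι : Type*} [Fintype ι] [DecidableEq ι]

noncomputable def toEuclideanLinearEquiv (g : SpecialLinearGroup ι ℝ) :
    EuclideanSpace ℝ ι ≃ₗ[ℝ] EuclideanSpace ℝ ι :=
  Matrix.toLinearEquiv (PiLp.basisFun 2 ℝ ι) g (by simp)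

theorem coe_toEuclideanLinearEquiv (g : SpecialLinearGroup ι ℝ) :
    ⇑g.toEuclideanLinearEquiv = Matrix.toEuclideanLin (g : Matrix ι ι ℝ) :=
  rfl

theorem volume_image_toEuclideanLinearEquiv (g : SpecialLinearGroup ι ℝ)
    (s : Set (EuclideanSpace ℝ ι)) : volume (g.toEuclideanLinearEquiv '' s) = volume s := by
  have hdet : LinearMap.det (g.toEuclideanLinearEquiv : EuclideanSpace ℝ ι →ₗ[ℝ] _) = 1 :=
    (LinearMap.det_toLin _ _).trans g.det_coe
  rw [← LinearEquiv.coe_coe, Measure.addHaar_image_linearMap, hdet, abs_one, ENNReal.ofReal_one,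
    one_mul]

end Matrix.SpecialLinearGroup

theorem MilmanRBM.exists_ellipsoid {c : ℝ} (hMilman : MilmanRBM c) (hc : 0 ≤ c) {d : ℕ}
    (hd : 0 < d) {C : Set (EuclideanSpace ℝ (Fin d))} (hCcpt : IsCompact C)
    (hCconv : Convex ℝ C) (hCint : (interior C).Nonempty) :
    ∃ (γ : EuclideanSpace ℝ (Fin d) ≃ₗ[ℝ] EuclideanSpace ℝ (Fin d)) (R : ℝ),
      0 < R ∧ volume (γ '' Metric.closedBall 0 R) = volume C ∧
      ∀ t₁ t₂ : ℝ, 0 < t₁ → 0 < t₂ →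
        volume (t₁ • C + t₂ • γ '' Metric.closedBall 0 R) ≤
          ENNReal.ofReal (c * (t₁ + t₂)) ^ d * volume C := by
  have : Nonempty (Fin d) := ⟨⟨0, hd⟩⟩
  obtain ⟨R, hR, hvolB⟩ := exists_pos_measure_closedBall_eq (E := EuclideanSpace ℝ (Fin d))
    volume (Measure.measure_pos_of_nonempty_interior volume hCint).ne' hCcpt.measure_lt_top.ne
  set B := Metric.closedBall (0 : EuclideanSpace ℝ (Fin d)) R
  have hBint : (interior B).Nonempty :=
    ⟨0, Metric.ball_subset_interior_closedBall (Metric.mem_ball_self hR)⟩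
  obtain ⟨γ₁, γ₂, hMil⟩ := hMilman d hd C B hCcpt hCconv hCint (isCompact_closedBall 0 R)
    (convex_closedBall 0 R) hBint
  set g₁ := γ₁.toEuclideanLinearEquiv
  set g₂ := γ₂.toEuclideanLinearEquiv
  have himage : ∀ s, g₁ '' (g₂.trans g₁.symm '' s) = g₂ '' s := fun s => by
    simp [Set.image_image]
  refine ⟨g₂.trans g₁.symm, R, hR, ?_, fun t₁ t₂ ht₁ ht₂ => ?_⟩
  · rw [← γ₁.volume_image_toEuclideanLinearEquiv, himage,
      γ₂.volume_image_toEuclideanLinearEquiv, hvolB]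
  · have h := hMil t₁ t₂ ht₁ ht₂
    rw [← γ₁.coe_toEuclideanLinearEquiv, ← γ₂.coe_toEuclideanLinearEquiv, ← himage,
      ← image_smul_set, ← image_smul_set, ← Set.image_add,
      γ₁.volume_image_toEuclideanLinearEquiv, hvolB] at h
    rw [← add_mul, ← mul_assoc, ← ENNReal.ofReal_add ht₁.le ht₂.le, ← ENNReal.ofReal_mul hc] at h
    exact ENNReal.le_pow_mul_of_rpow_le hd.ne' h

theorem stmt_12 (c : ℝ) (hc : 1 ≤ c) (hMilman : MilmanRBM c)
    (d : ℕ) (hd : 0 < d) (C : Set (EuclideanSpace ℝ (Fin d)))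
    (hCcpt : IsCompact C) (hCconv : Convex ℝ C) (hCint : (interior C).Nonempty)
    (hCsymm : C = -C) :
    ∃ (E : Set (EuclideanSpace ℝ (Fin d)))
      (γ : EuclideanSpace ℝ (Fin d) ≃ₗ[ℝ] EuclideanSpace ℝ (Fin d)) (R : ℝ),
      0 < R ∧ E = γ '' Metric.closedBall 0 R ∧ volume E = volume C ∧
      ∃ Y Z : Set (EuclideanSpace ℝ (Fin d)),
        Y ⊆ intLattice d ∧ Z ⊆ intLattice d ∧ Y.Finite ∧ Z.Finite ∧
        (Y.ncard : ℝ) ≤ (3 * c) ^ d ∧ (Z.ncard : ℝ) ≤ (3 * c) ^ d ∧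
        C ∩ intLattice d ⊆ Y + (E ∩ intLattice d) ∧
        E ∩ intLattice d ⊆ Z + (C ∩ intLattice d) := by
  obtain ⟨γ, R, hR, hvolE, hsum⟩ :=
    hMilman.exists_ellipsoid (by linarith) hd hCcpt hCconv hCint
  set E := γ '' Metric.closedBall 0 R
  have hC0 : volume C ≠ 0 := (Measure.measure_pos_of_nonempty_interior _ hCint).ne'
  have hCneg : ∀ x ∈ C, -x ∈ C := fun x hx => by rw [hCsymm]; exact Set.neg_mem_neg.2 hx
  have hEcpt : IsCompact E :=
    (isCompact_closedBall 0 R).image (LinearMap.continuous_of_finiteDimensional γ.toLinearMap)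
  have hEconv : Convex ℝ E := (convex_closedBall 0 R).linear_image γ.toLinearMap
  have hEneg : ∀ x ∈ E, -x ∈ E := by
    rintro _ ⟨b, hb, rfl⟩
    exact ⟨-b, by simpa using hb, map_neg γ b⟩
  have hCE : volume (C + (2 : ℝ)⁻¹ • E) ≤ ENNReal.ofReal (3 * c / 2) ^ d * volume E := by
    have h := hsum 1 2⁻¹ one_pos (by norm_num)
    rwa [one_smul, show c * (1 + 2⁻¹) = 3 * c / 2 by ring, ← hvolE] at h
  have hEC : volume (E + (2 : ℝ)⁻¹ • C) ≤ ENNReal.ofReal (3 * c / 2) ^ d * volume C := by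
    have h := hsum 2⁻¹ 1 (by norm_num) one_pos
    rwa [one_smul, add_comm ((2 : ℝ)⁻¹ • C), show c * (2⁻¹ + 1) = 3 * c / 2 by ring] at h
  obtain ⟨Y, hY, hYfin, hYcard, hYcover⟩ := exists_intLattice_cover (by linarith)
    hCcpt.isBounded hEcpt hEconv hEneg (hvolE ▸ hC0) hCE
  obtain ⟨Z, hZ, hZfin, hZcard, hZcover⟩ := exists_intLattice_cover (by linarith)
    hEcpt.isBounded hCcpt hCconv hCneg hC0 hEC
  exact ⟨E, γ, R, hR, rfl, hvolE, Y, Z, hY, hZ, hYfin, hZfin, hYcard, hZcard, hYcover, hZcover⟩
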